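/- Let F be a field of characteristic p with discrete valuation v and λ ∈ F with v(λ − 1) = r, 0 < r < ∞. Then for every k ≥ 1, m_{r·p^k}(λ) = p^k, where m_n(λ) = min{j ≥ 1 : v(λ^j − 1) ≥ n}. -/

import Mathlib

/-!
Write `j = p^m u` with `p ∤ u`. In characteristic `p`, `λ^(p^m) - 1 = (λ - 1)^(p^m)` has
valuation `p^m r`; and if `v(μ - 1) > 0` and `p ∤ u` then `μ^u - 1 = (μ - 1)(1 + μ + ⋯ + μ^(u-1))`
where the second factor is `≡ u` modulo the maximal ideal, a nonzero element of the prime field,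
hence a unit. So `v(λ^j - 1) = p^(v_p j) r`, which is `≥ r p^k` exactly when `p^k ∣ j`.
-/

open Finset

namespace AddValuation

variable {R Γ₀ : Type*} [LinearOrderedAddCommMonoidWithTop Γ₀]

section CommRing

variable [CommRing R] (v : AddValuation R Γ₀) {x : R}

lemma map_eq_zero_of_pos_map_sub_one (hx : 0 < v (x - 1)) : v x = 0 := by
  simpa using v.map_add_eq_of_lt_left (x := 1) (y := x - 1) (by simpa using hx)

lemma map_geom_sum_nonneg (hx : 0 ≤ v x) (n : ℕ) : 0 ≤ v (∑ i ∈ range n, x ^ i) :=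
  v.map_le_sum fun i _ => by rw [v.map_pow]; exact nsmul_nonneg hx i

lemma map_sub_one_le_map_pow_sub_one (hx : 0 ≤ v x) (n : ℕ) : v (x - 1) ≤ v (x ^ n - 1) := by
  rw [← mul_geom_sum, v.map_mul]
  exact le_add_of_nonneg_right (v.map_geom_sum_nonneg hx n)

lemma map_geom_sum_eq_zero (hx : 0 < v (x - 1)) {n : ℕ} (hn : v n = 0) :
    v (∑ i ∈ range n, x ^ i) = 0 := by
  have hdecomp : ∑ i ∈ range n, x ^ i = n + ∑ i ∈ range n, (x ^ i - 1) := by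
    simp [sum_sub_distrib]
  have hx0 := (v.map_eq_zero_of_pos_map_sub_one hx).ge
  have hrest : 0 < v (∑ i ∈ range n, (x ^ i - 1)) :=
    v.map_lt_sum' (hx.trans_le le_top) fun i _ =>
      hx.trans_le (v.map_sub_one_le_map_pow_sub_one hx0 i)
  rw [hdecomp, v.map_add_eq_of_lt_left (hn ▸ hrest), hn]

lemma map_pow_sub_one_of_map_natCast_eq_zero (hx : 0 < v (x - 1)) {n : ℕ} (hn : v n = 0) :
    v (x ^ n - 1) = v (x - 1) := by
  rw [← mul_geom_sum, v.map_mul, v.map_geom_sum_eq_zero hx hn, add_zero]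

lemma map_pow_prime_pow_sub_one (p : ℕ) [Fact p.Prime] [CharP R p] (m : ℕ) :
    v (x ^ p ^ m - 1) = p ^ m • v (x - 1) := by
  rw [← one_pow (p ^ m), ← sub_pow_char_pow, v.map_pow, one_pow]

end CommRing

variable [Field R] (v : AddValuation R Γ₀) (p : ℕ) [Fact p.Prime] [CharP R p]

lemma map_natCast_eq_zero_of_not_dvd {n : ℕ} (hn : ¬ p ∣ n) : v n = 0 := by
  let := ZMod.algebra R p
  have h := FiniteField.valuation_algebraMap_eq_one (A := R) v (n : ZMod p)
    (by rwa [Ne, ZMod.natCast_eq_zero_iff])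
  rw [map_natCast] at h
  -- `v` is a valuation into `Multiplicative Γ₀ᵒᵈ`, whose `1` is `0 : Γ₀`
  exact h

lemma map_pow_sub_one_eq_prime_pow_factorization_nsmul {x : R} (hx : 0 < v (x - 1)) {j : ℕ}
    (hj : j ≠ 0) : v (x ^ j - 1) = p ^ j.factorization p • v (x - 1) := by
  set m := j.factorization p
  have hsplit : x ^ j = (x ^ p ^ m) ^ (j / p ^ m) := by
    rw [← pow_mul, Nat.ordProj_mul_ordCompl_eq_self]
  have hcompl : v (j / p ^ m : ℕ) = 0 :=
    v.map_natCast_eq_zero_of_not_dvd p (Nat.not_dvd_ordCompl Fact.out hj)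
  have hpos : 0 < v (x ^ p ^ m - 1) :=
    hx.trans_le (v.map_sub_one_le_map_pow_sub_one (v.map_eq_zero_of_pos_map_sub_one hx).ge _)
  rw [hsplit, v.map_pow_sub_one_of_map_natCast_eq_zero hpos hcompl, v.map_pow_prime_pow_sub_one p]

end AddValuation

lemma Nat.sInf_setOf_pos_and_dvd {n : ℕ} (hn : 0 < n) : sInf {j : ℕ | 0 < j ∧ n ∣ j} = n :=
  le_antisymm (Nat.sInf_le ⟨hn, dvd_rfl⟩)
    (le_csInf ⟨n, hn, dvd_rfl⟩ fun _ ⟨hj, hdvd⟩ => Nat.le_of_dvd hj hdvd)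

theorem stmt5_general (F : Type*) [Field F] (p : ℕ) [Fact p.Prime] [CharP F p]
    (v : AddValuation F (WithTop ℤ)) (lam : F) (r : ℤ) (hr : 0 < r)
    (hv : v (lam - 1) = (r : WithTop ℤ)) (k : ℕ) :
    sInf {j : ℕ | 0 < j ∧ ((r * p ^ k : ℤ) : WithTop ℤ) ≤ v (lam ^ j - 1)} = p ^ k := by
  have hp : p.Prime := Fact.out
  have hlam : 0 < v (lam - 1) := by rw [hv]; exact_mod_cast hr
  convert Nat.sInf_setOf_pos_and_dvd (pow_pos hp.pos k) using 4 with j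
  refine and_congr_right fun hj => ?_
  rw [v.map_pow_sub_one_eq_prime_pow_factorization_nsmul p hlam hj.ne', hv, ← WithTop.coe_nsmul,
    WithTop.coe_le_coe, nsmul_eq_mul, mul_comm, mul_le_mul_iff_left₀ hr,
    hp.pow_dvd_iff_le_factorization hj.ne']
  exact_mod_cast Nat.pow_le_pow_iff_right hp.one_lt

/-- With `v(λ - 1) = r`, `0 < r < ∞`, in characteristic `p`:
for every `k ≥ 1`, `m_{r·p^k}(λ) = p^k`. -/
theorem stmt5 (F : Type*) [Field F] (p : ℕ) [Fact p.Prime] [CharP F p]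
    (v : AddValuation F (WithTop ℤ)) (lam : F) (r : ℤ) (hr : 0 < r)
    (hv : v (lam - 1) = (r : WithTop ℤ)) (k : ℕ) (hk : 1 ≤ k) :
    sInf {j : ℕ | 0 < j ∧ ((r * p ^ k : ℤ) : WithTop ℤ) ≤ v (lam ^ j - 1)} = p ^ k :=
  stmt5_general F p v lam r hr hv k
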